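/- arXiv:2003.05791 — 4 statements merged into one kernel-verified Lean document; each statement's English description precedes it below -/
import Mathlib

section
/- Let p ≥ 5 be a prime and ζ a primitive p-th root of unity. Then λ = 2 + ζ + ζ^{-1} and μ = -1 - ζ - ζ^{-1} are units in Z[ζ] satisfying λ + μ = 1. In particular, the unit equation λ + μ = 1 has a solution in units of the ring of integers of Q(ζ_p). -/
open NumberField

/-!
Writing `η` for `ζ` viewed in `𝓞 K`, we have `2 + ζ + ζ⁻¹ = η⁻¹ (1 + η)²` and
`-1 - ζ - ζ⁻¹ = -η⁻¹ (1 + η + η²)`. As `p` is prime to `2` and `3`, the geometric sums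
`1 + η` and `1 + η + η²` are cyclotomic units, hence so are both numbers.
-/

namespace IsPrimitiveRoot

variable {A : Type*} [CommRing A] [IsDomain A] {n : ℕ}

theorem isUnit_one_add {ζ : A} (hζ : IsPrimitiveRoot ζ n) (hn : 2 ≤ n) (h2 : Nat.Coprime 2 n) :
    IsUnit (1 + ζ) := by
  simpa [Finset.sum_range_succ] using hζ.geom_sum_isUnit hn h2

theorem isUnit_one_add_add_sq {ζ : A} (hζ : IsPrimitiveRoot ζ n) (hn : 2 ≤ n)
    (h3 : Nat.Coprime 3 n) : IsUnit (1 + ζ + ζ ^ 2) := by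
  simpa [Finset.sum_range_succ, pow_two] using hζ.geom_sum_isUnit hn h3

theorem isUnit_two_add_add_inv {u : Aˣ} (hu : IsPrimitiveRoot (u : A) n) (hn : 2 ≤ n)
    (h2 : Nat.Coprime 2 n) : IsUnit (2 + u + ↑u⁻¹ : A) := by
  have h : (2 + u + ↑u⁻¹ : A) = ↑u⁻¹ * (1 + u) ^ 2 := by
    linear_combination -(2 + (u : A)) * u.inv_mul
  rw [h]
  exact u⁻¹.isUnit.mul ((hu.isUnit_one_add hn h2).pow 2)

theorem isUnit_neg_one_sub_sub_inv {u : Aˣ} (hu : IsPrimitiveRoot (u : A) n) (hn : 2 ≤ n)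
    (h3 : Nat.Coprime 3 n) : IsUnit (-1 - u - ↑u⁻¹ : A) := by
  have h : (-1 - u - ↑u⁻¹ : A) = -(↑u⁻¹ * (1 + u + u ^ 2)) := by
    linear_combination (1 + (u : A)) * u.inv_mul
  rw [h]
  exact (u⁻¹.isUnit.mul (hu.isUnit_one_add_add_sq hn h3)).neg

end IsPrimitiveRoot

theorem unit_equation_has_solution_in_cyclotomic_general (p : ℕ+) (hp : (p : ℕ).Prime)
    (hp5 : 5 ≤ (p : ℕ)) (K : Type*) [Field K]
    (ζ : K) (hζ : IsPrimitiveRoot ζ p) :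
    (∃ u : (𝓞 K)ˣ, algebraMap (𝓞 K) K (u : 𝓞 K) = 2 + ζ + ζ⁻¹) ∧
    (∃ v : (𝓞 K)ˣ, algebraMap (𝓞 K) K (v : 𝓞 K) = -1 - ζ - ζ⁻¹) ∧
    (2 + ζ + ζ⁻¹) + (-1 - ζ - ζ⁻¹) = 1 := by
  have hp2 : Nat.Coprime 2 p := (Nat.coprime_primes Nat.prime_two hp).2 (by omega)
  have hp3 : Nat.Coprime 3 p := (Nat.coprime_primes Nat.prime_three hp).2 (by omega)
  set η : (𝓞 K)ˣ := (hζ.toInteger_isPrimitiveRoot.isUnit p.ne_zero).unit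
  have hη : IsPrimitiveRoot (η : 𝓞 K) p := hζ.toInteger_isPrimitiveRoot
  have hηζ : algebraMap (𝓞 K) K η = ζ := rfl
  refine ⟨⟨(hη.isUnit_two_add_add_inv (by omega) hp2).unit, ?_⟩,
    ⟨(hη.isUnit_neg_one_sub_sub_inv (by omega) hp3).unit, ?_⟩, by ring⟩ <;>
  simp [map_units_inv, map_ofNat, hηζ]

/-- Let `p ≥ 5` be a prime and `ζ` a primitive `p`-th root of unity. Then
`λ = 2 + ζ + ζ⁻¹` and `μ = -1 - ζ - ζ⁻¹` are units in the ring of integers of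
the `p`-th cyclotomic field `ℚ(ζ_p)` and they satisfy `λ + μ = 1`; in particular
the unit equation has a solution in units of the ring of integers of `ℚ(ζ_p)`. -/
theorem unit_equation_has_solution_in_cyclotomic (p : ℕ+) (hp : (p : ℕ).Prime)
    (hp5 : 5 ≤ (p : ℕ)) (K : Type*) [Field K] [NumberField K] [IsCyclotomicExtension {(p : ℕ)} ℚ K]
    (ζ : K) (hζ : IsPrimitiveRoot ζ p) :
    (∃ u : (𝓞 K)ˣ, algebraMap (𝓞 K) K (u : 𝓞 K) = 2 + ζ + ζ⁻¹) ∧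
    (∃ v : (𝓞 K)ˣ, algebraMap (𝓞 K) K (v : 𝓞 K) = -1 - ζ - ζ⁻¹) ∧
    (2 + ζ + ζ⁻¹) + (-1 - ζ - ζ⁻¹) = 1 :=
  unit_equation_has_solution_in_cyclotomic_general p hp hp5 K ζ hζ
end

section
/- Let K/F be a Galois extension of number fields of degree (p-1)/2, where p is a rational prime totally ramified in K, and let 𝔭 be the unique prime of F above p. Then every ε in O_F^× that is a norm of some element of K^× satisfies ε ≡ ±1 (mod 𝔭). -/
/-!
Since `p` is totally ramified in `K`, the prime `𝔓` above `p` is the only prime of `𝓞 K`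
containing `p` and its residue field is `𝔽_p`. Hence `Gal(K/F)` acts trivially on `𝓞 K ⧸ 𝔓`,
and modulo `𝔓` the norm `K → F` becomes the `m`-th power map, `m = [K : F] = (p - 1) / 2`.
Writing `η = a / b` (or `η⁻¹ = a / b`) with `b ∉ 𝔓`, the unit `ε` becomes an `m`-th power
modulo `𝔓`, so `ε² ≡ 1 (mod 𝔓)` by Fermat's little theorem; finally `𝔭 = 𝔓 ∩ 𝓞 F`.
-/

open NumberField Module

theorem RingHom.ext_of_natCard_eq_prime {R S : Type*} [Ring R] [NonAssocSemiring S] {p : ℕ}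
    (hp : p.Prime) (hR : Nat.card R = p) (f g : R →+* S) : f = g := by
  have : _root_.Finite R := Nat.finite_of_card_ne_zero (hR ▸ hp.ne_zero)
  let : Fintype R := Fintype.ofFinite R
  let e := ZMod.ringEquivOfPrime R hp ((Nat.card_eq_fintype_card (α := R)).symm.trans hR)
  have hfg : f.comp (e : ZMod p →+* R) = g.comp e := RingHom.ext_zmod _ _
  ext x
  simpa using congr($hfg (e.symm x))

theorem Ideal.Quotient.mk_apply_eq_of_natCard_eq_prime {R : Type*} [CommRing R] {P : Ideal R}
    {p : ℕ} (hp : p.Prime) (hP : Nat.card (R ⧸ P) = p) (f : R →+* R) (hf : P ≤ P.comap f)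
    (x : R) : Ideal.Quotient.mk P (f x) = Ideal.Quotient.mk P x := by
  simpa using congr($(RingHom.ext_of_natCard_eq_prime hp hP (Ideal.quotientMap P f hf)
    (RingHom.id _)) (Ideal.Quotient.mk P x))

theorem Ideal.eq_of_isPrime_of_span_singleton_eq_pow {R : Type*} [CommRing R] {P Q : Ideal R}
    (hP : P.IsMaximal) (hQ : Q.IsPrime) {x : R} {n : ℕ} (h : Ideal.span {x} = P ^ n)
    (hx : x ∈ Q) : Q = P :=
  (hP.eq_of_le hQ.ne_top (hQ.le_of_pow_le (h ▸ (Ideal.span_singleton_le_iff_mem Q).2 hx))).symm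

theorem Ideal.under_eq_of_forall_isPrime_eq {A B : Type*} [CommRing A] [CommRing B] [Algebra A B]
    [Algebra.IsIntegral A B] [FaithfulSMul A B] {P : Ideal B} {𝔭 : Ideal A} [𝔭.IsPrime] {x : A}
    (hx : x ∈ 𝔭) (huniq : ∀ Q : Ideal B, Q.IsPrime → algebraMap A B x ∈ Q → Q = P) :
    P.under A = 𝔭 := by
  obtain ⟨Q, hQ, hQ𝔭⟩ := (Ideal.nonempty_primesOver (S := B) 𝔭).some
  have hxQ : algebraMap A B x ∈ Q := by
    rwa [← Ideal.mem_comap, ← Ideal.under_def, ← hQ𝔭.over]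
  rw [← huniq Q hQ hxQ, ← hQ𝔭.over]

theorem exists_notMem_mul_eq_or_inv_mul_eq {R K : Type*} [CommRing R] [IsDedekindDomain R]
    [Field K] [Algebra R K] [IsFractionRing R K] {P : Ideal R} [P.IsPrime] (hP : P ≠ ⊥) (x : K) :
    ∃ a b : R, b ∉ P ∧
      (x * algebraMap R K b = algebraMap R K a ∨ x⁻¹ * algebraMap R K b = algebraMap R K a) := by
  let A := Localization.subalgebra K P.primeCompl P.primeCompl_le_nonZeroDivisors
  have : IsLocalization.AtPrime A P :=
    Localization.subalgebra.isLocalization_subalgebra K _ P.primeCompl_le_nonZeroDivisors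
  have : IsDiscreteValuationRing A :=
    IsLocalization.AtPrime.isDiscreteValuationRing_of_dedekind_domain R hP A
  have hfrac : ∀ y : K, IsLocalization.IsInteger A y →
      ∃ a b : R, b ∉ P ∧ y * algebraMap R K b = algebraMap R K a := by
    rintro y ⟨r, rfl⟩
    obtain ⟨⟨a, b⟩, hab⟩ := IsLocalization.surj P.primeCompl r
    refine ⟨a, b, b.2, ?_⟩
    simpa [← IsScalarTower.algebraMap_apply] using congr(algebraMap A K $hab)
  rcases ValuationRing.isInteger_or_isInteger A x with h | h
  · obtain ⟨a, b, hb, hab⟩ := hfrac x h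
    exact ⟨a, b, hb, .inl hab⟩
  · obtain ⟨a, b, hb, hab⟩ := hfrac x⁻¹ h
    exact ⟨a, b, hb, .inr hab⟩

theorem natCard_quotient_eq_of_span_natCast_eq_pow {K : Type*} [Field K] [NumberField K]
    {P : Ideal (𝓞 K)} {p : ℕ} (h : Ideal.span {(p : 𝓞 K)} = P ^ finrank ℚ K) :
    Nat.card (𝓞 K ⧸ P) = p := by
  have := Ideal.absNorm_span_natCast (S := 𝓞 K) p
  rw [h, map_pow, RingOfIntegers.rank] at this
  rw [← Submodule.cardQuot_apply, ← Ideal.absNorm_apply]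
  exact Nat.pow_left_injective finrank_pos.ne' this

section Galois

variable {F K : Type*} [Field F] [NumberField F] [Field K] [NumberField K] [Algebra F K]
  [IsGalois F K]

theorem map_algebraMap_norm_eq_pow {S : Type*} [CommRing S] (φ : 𝓞 K →+* S)
    (hφ : ∀ (σ : Gal(K/F)) (x : 𝓞 K), φ (galRestrict (𝓞 F) F K (𝓞 K) σ x) = φ x) (a : 𝓞 K) :
    φ (algebraMap (𝓞 F) (𝓞 K) (RingOfIntegers.norm F a)) = φ a ^ finrank F K := by
  have hprod : algebraMap (𝓞 F) (𝓞 K) (RingOfIntegers.norm F a) =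
      ∏ σ : Gal(K/F), galRestrict (𝓞 F) F K (𝓞 K) σ a := by
    ext
    simp [RingOfIntegers.coe_algebraMap_norm, Algebra.norm_eq_prod_automorphisms,
      algebraMap_galRestrict_apply]
  rw [hprod, map_prod, Finset.prod_congr rfl fun σ _ => hφ σ a, Finset.prod_const,
    Finset.card_univ, ← Nat.card_eq_fintype_card, IsGalois.card_aut_eq_finrank]

theorem sq_map_algebraMap_eq_one_of_norm_eq_of_mul_eq {k : Type*} [Field k] [Fintype k]
    (hk : Fintype.card k = 2 * finrank F K + 1) (φ : 𝓞 K →+* k)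
    (hφ : ∀ (σ : Gal(K/F)) (x : 𝓞 K), φ (galRestrict (𝓞 F) F K (𝓞 K) σ x) = φ x)
    (ε : (𝓞 F)ˣ) {η : K} (hN : Algebra.norm F η = algebraMap (𝓞 F) F ε) {a b : 𝓞 K}
    (hb : φ b ≠ 0) (hab : η * algebraMap (𝓞 K) K b = algebraMap (𝓞 K) K a) :
    φ (algebraMap (𝓞 F) (𝓞 K) ε) ^ 2 = 1 := by
  have hNab : RingOfIntegers.norm F a = ε * RingOfIntegers.norm F b := by
    ext
    simp [← hab, hN]
  have hε : φ (algebraMap (𝓞 F) (𝓞 K) ε) = (φ a / φ b) ^ finrank F K := by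
    rw [div_pow, eq_div_iff (pow_ne_zero _ hb), ← map_algebraMap_norm_eq_pow φ hφ,
      ← map_algebraMap_norm_eq_pow φ hφ, ← map_mul, ← map_mul, hNab]
  have hab0 : φ a / φ b ≠ 0 :=
    ne_zero_pow finrank_pos.ne' (hε ▸ ((ε.isUnit.map _).map φ).ne_zero)
  rw [hε, ← pow_mul, mul_comm, ← Nat.add_sub_cancel (2 * _) 1, ← hk]
  exact FiniteField.pow_card_sub_one_eq_one _ hab0

theorem sq_mk_algebraMap_eq_one_of_norm_eq {P : Ideal (𝓞 K)} [P.IsMaximal]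
    (hcard : Nat.card (𝓞 K ⧸ P) = 2 * finrank F K + 1)
    (hgal : ∀ (σ : Gal(K/F)) (x : 𝓞 K),
      Ideal.Quotient.mk P (galRestrict (𝓞 F) F K (𝓞 K) σ x) = Ideal.Quotient.mk P x)
    (ε : (𝓞 F)ˣ) {η : K} (hN : Algebra.norm F η = algebraMap (𝓞 F) F ε) :
    Ideal.Quotient.mk P (algebraMap (𝓞 F) (𝓞 K) ε) ^ 2 = 1 := by
  let := Ideal.Quotient.field P
  let := Fintype.ofFinite (𝓞 K ⧸ P)
  rw [Nat.card_eq_fintype_card] at hcard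
  have hP : P ≠ ⊥ := Ring.ne_bot_of_isMaximal_of_not_isField ‹_› (RingOfIntegers.not_isField K)
  obtain ⟨a, b, hb, hab⟩ := exists_notMem_mul_eq_or_inv_mul_eq hP η
  have hb' : Ideal.Quotient.mk P b ≠ 0 := Ideal.Quotient.eq_zero_iff_mem.not.2 hb
  rcases hab with hab | hab
  · exact sq_map_algebraMap_eq_one_of_norm_eq_of_mul_eq hcard _ hgal ε hN hb' hab
  · have hN' : Algebra.norm F η⁻¹ = algebraMap (𝓞 F) F ↑ε⁻¹ := by
      rw [Algebra.norm_inv, hN, eq_comm]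
      exact eq_inv_of_mul_eq_one_left (by rw [← map_mul, Units.inv_mul, map_one])
    have h := sq_map_algebraMap_eq_one_of_norm_eq_of_mul_eq hcard _ hgal ε⁻¹ hN' hb' hab
    have hinv : Ideal.Quotient.mk P (algebraMap (𝓞 F) (𝓞 K) ↑ε⁻¹) *
        Ideal.Quotient.mk P (algebraMap (𝓞 F) (𝓞 K) ε) = 1 := by
      rw [← map_mul, ← map_mul, Units.inv_mul, map_one, map_one]
    calc _ = (Ideal.Quotient.mk P (algebraMap (𝓞 F) (𝓞 K) ↑ε⁻¹) *
          Ideal.Quotient.mk P (algebraMap (𝓞 F) (𝓞 K) ε)) ^ 2 := by rw [mul_pow, h, one_mul]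
      _ = 1 := by rw [hinv, one_pow]

end Galois

/-- Let `K/F` be a Galois extension of number fields of degree `(p-1)/2`, where `p` is a
rational prime totally ramified in `K` (i.e. `p·O_K = 𝔓^[K:ℚ]` for a (necessarily unique)
maximal ideal `𝔓` of `O_K`), and let `𝔭` be the (unique) prime of `F` above `p`. Then every
`ε ∈ O_F^×` which is the norm of some element of `K^×` satisfies `ε ≡ ±1 (mod 𝔭)`. -/
theorem norm_unit_eq_pm_one_mod_p (F K : Type*) [Field F] [NumberField F]
    [Field K] [NumberField K] [Algebra F K] [IsGalois F K]
    (p : ℕ) (hp : p.Prime) (hdeg : Module.finrank F K = (p - 1) / 2)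
    (htot : ∃ 𝔓 : Ideal (𝓞 K), 𝔓.IsMaximal ∧
      Ideal.span {(p : 𝓞 K)} = 𝔓 ^ Module.finrank ℚ K)
    (𝔭 : Ideal (𝓞 F)) (h𝔭 : 𝔭.IsMaximal) (hp𝔭 : (p : 𝓞 F) ∈ 𝔭)
    (ε : (𝓞 F)ˣ) (hε : ∃ η : K, η ≠ 0 ∧ Algebra.norm F η = algebraMap (𝓞 F) F (ε : 𝓞 F)) :
    (ε : 𝓞 F) - 1 ∈ 𝔭 ∨ (ε : 𝓞 F) + 1 ∈ 𝔭 := by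
  obtain ⟨𝔓, h𝔓, hspan⟩ := htot
  obtain ⟨η, -, hN⟩ := hε
  have hp𝔓 : (p : 𝓞 K) ∈ 𝔓 :=
    Ideal.pow_le_self finrank_pos.ne' (hspan ▸ Ideal.mem_span_singleton_self _)
  have huniq : ∀ Q : Ideal (𝓞 K), Q.IsPrime → (p : 𝓞 K) ∈ Q → Q = 𝔓 := fun Q hQ ↦
    Ideal.eq_of_isPrime_of_span_singleton_eq_pow h𝔓 hQ hspan
  have hcard : Nat.card (𝓞 K ⧸ 𝔓) = p := natCard_quotient_eq_of_span_natCast_eq_pow hspan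
  have hgal (σ : Gal(K/F)) (x : 𝓞 K) :
      Ideal.Quotient.mk 𝔓 (galRestrict (𝓞 F) F K (𝓞 K) σ x) = Ideal.Quotient.mk 𝔓 x :=
    Ideal.Quotient.mk_apply_eq_of_natCard_eq_prime hp hcard
      (galRestrict (𝓞 F) F K (𝓞 K) σ : 𝓞 K →+* 𝓞 K)
      (huniq _ (Ideal.comap_isPrime _ _) (by simpa using hp𝔓)).ge x
  have hp_odd : p = 2 * finrank F K + 1 := by
    have := finrank_pos (R := F) (M := K)
    rcases hp.eq_two_or_odd with rfl | h <;> omega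
  have hsq := sq_mk_algebraMap_eq_one_of_norm_eq (hcard.trans hp_odd) hgal ε hN
  rw [← Ideal.under_eq_of_forall_isPrime_eq hp𝔭 (by simpa using huniq), Ideal.under_def,
    Ideal.mem_comap, Ideal.mem_comap, ← Ideal.Quotient.eq_zero_iff_mem,
    ← Ideal.Quotient.eq_zero_iff_mem]
  let := Ideal.Quotient.field 𝔓
  simpa [sub_eq_zero, add_eq_zero_iff_eq_neg] using hsq
end

section
/- Let F be a number field, 𝔮 the prime of F above 2 with 2 inert in F (so 𝔮 = 2O_F), and S = {𝔮}. Suppose (λ, μ) solves the S-unit equation λ + μ = 1 with λ ∈ O_F, ord_𝔮(λ) = n ≥ 2, ord_𝔮(μ) = 0, and μ = δ² for some unit δ ∈ O_F^×. Set λ₁ = 1 + δ and λ₂ = 1 - δ. Then λ₁λ₂ = λ, λ₁ + λ₂ = 2, λ₁ - λ₂ = 2δ, both λ₁, λ₂ are S-units with nonnegative 𝔮-valuation, and one of ord_𝔮(λ₁), ord_𝔮(λ₂) equals 1 while the other equals n - 1. -/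
/-!
Since `λ₁ + λ₂ = 2` and `ord_𝔮(2) = 1`, the ultrametric inequality applied to `λ₁ = 2 - λ₂` and
`λ₂ = 2 - λ₁` shows that neither factor can be a `𝔮`-unit unless both are, which
`ord_𝔮(λ₁) + ord_𝔮(λ₂) = n ≥ 1` rules out; applied to `λ₁ + λ₂` it shows the smaller valuation
is at most `1`. Away from `𝔮` the factors are integral with unit product, hence units.
-/

open NumberField IsDedekindDomain

/-- The additive `𝔮`-adic valuation `ord_𝔮(x) ∈ ℤ` of a nonzero element `x` of a number
field `F`, at the height-one prime `𝔮` of `O_F` (junk value `0` at `x = 0`). -/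
noncomputable def ordAt {F : Type*} [Field F] [NumberField F]
    (v : HeightOneSpectrum (𝓞 F)) (x : F) : ℤ :=
  if h : v.valuation F x = 0 then 0 else -Multiplicative.toAdd (WithZero.unzero h)

namespace IsDedekindDomain.HeightOneSpectrum

variable {R : Type*} [CommRing R] [IsDedekindDomain R] {K : Type*} [Field K] [Algebra R K]
  [IsFractionRing R K] (w : HeightOneSpectrum R)

lemma valuation_algebraMap_eq_one_of_mul {a b : R}
    (h : w.valuation K (algebraMap R K (a * b)) = 1) :
    w.valuation K (algebraMap R K a) = 1 ∧ w.valuation K (algebraMap R K b) = 1 := by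
  simp only [valuation_of_algebraMap, intValuation_eq_one_iff] at h ⊢
  exact ⟨fun ha ↦ h (w.asIdeal.mul_mem_right b ha), fun hb ↦ h (w.asIdeal.mul_mem_left a hb)⟩

end IsDedekindDomain.HeightOneSpectrum

section ordAt

open WithZero

variable {F : Type*} [Field F] [NumberField F] (v : HeightOneSpectrum (𝓞 F))

lemma ordAt_eq_neg_log (x : F) : ordAt v x = -log (v.valuation F x) := by
  unfold ordAt
  split_ifs with h
  · simp [h]
  · rw [toAdd_unzero_eq_log]

@[simp]
lemma ordAt_zero : ordAt v (0 : F) = 0 := by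
  simp [ordAt_eq_neg_log]

lemma ordAt_mul {x y : F} (hx : x ≠ 0) (hy : y ≠ 0) :
    ordAt v (x * y) = ordAt v x + ordAt v y := by
  simp only [ordAt_eq_neg_log, map_mul]
  rw [log_mul (by simpa using hx) (by simpa using hy)]
  ring

lemma ordAt_neg (x : F) : ordAt v (-x) = ordAt v x := by
  simp only [ordAt_eq_neg_log, Valuation.map_neg]

lemma min_ordAt_le_ordAt_add {x y : F} (hxy : x + y ≠ 0) :
    min (ordAt v x) (ordAt v y) ≤ ordAt v (x + y) := by
  simp only [ordAt_eq_neg_log, min_neg_neg, neg_le_neg_iff]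
  have hle := (v.valuation F).map_add x y
  have hxy0 : v.valuation F (x + y) ≠ 0 := (v.valuation F).ne_zero_iff.2 hxy
  rcases le_total (v.valuation F x) (v.valuation F y) with h | h
  · rw [max_eq_right h] at hle
    exact le_max_of_le_right ((log_le_log hxy0 (zero_lt_iff.2 hxy0 |>.trans_le hle).ne').2 hle)
  · rw [max_eq_left h] at hle
    exact le_max_of_le_left ((log_le_log hxy0 (zero_lt_iff.2 hxy0 |>.trans_le hle).ne').2 hle)

lemma min_ordAt_le_ordAt_sub {x y : F} (hxy : x - y ≠ 0) :
    min (ordAt v x) (ordAt v y) ≤ ordAt v (x - y) := by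
  rw [sub_eq_add_neg] at hxy ⊢
  simpa only [ordAt_neg] using min_ordAt_le_ordAt_add v hxy

lemma ordAt_nonneg_of_valuation_le_one {x : F} (hx : v.valuation F x ≤ 1) : 0 ≤ ordAt v x := by
  rw [ordAt_eq_neg_log, neg_nonneg]
  rcases eq_or_ne (v.valuation F x) 0 with h | h
  · simp [h]
  · rwa [log_le_iff_le_exp h]

lemma ordAt_algebraMap_of_asIdeal_eq_span {π : 𝓞 F} (hπ : v.asIdeal = Ideal.span {π}) :
    ordAt v (algebraMap (𝓞 F) F π) = 1 := by
  have hπ0 : π ≠ 0 := by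
    rintro rfl
    exact v.ne_bot (by simpa using hπ)
  rw [ordAt_eq_neg_log, v.valuation_of_algebraMap, v.intValuation_singleton hπ0 hπ, log_exp,
    neg_neg]

lemma ordAt_eq_one_or_of_ordAt_add_eq_one {x y : F} (hx : x ≠ 0) (hy : y ≠ 0)
    (hsum : ordAt v (x + y) = 1) (hxy : 1 ≤ ordAt v (x * y)) :
    (ordAt v x = 1 ∧ ordAt v y = ordAt v (x * y) - 1) ∨
      (ordAt v x = ordAt v (x * y) - 1 ∧ ordAt v y = 1) := by
  have hsum0 : x + y ≠ 0 := fun h ↦ by simp [h] at hsum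
  have hmul := ordAt_mul v hx hy
  have hmin := min_ordAt_le_ordAt_add v hsum0
  have hxmin := min_ordAt_le_ordAt_sub v (x := x + y) (y := y) (by simpa)
  have hymin := min_ordAt_le_ordAt_sub v (x := x + y) (y := x) (by simpa)
  simp only [add_sub_cancel_right, add_sub_cancel_left, hsum] at hmin hxmin hymin
  omega

end ordAt

theorem sunit_descent_factors_general (F : Type*) [Field F] [NumberField F]
    (v : HeightOneSpectrum (𝓞 F)) (h2 : v.asIdeal = Ideal.span {(2 : 𝓞 F)})
    (lam mu : F) (hsum : lam + mu = 1)
    (hlamS : ∀ w : HeightOneSpectrum (𝓞 F), w ≠ v → w.valuation F lam = 1)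
    (n : ℕ) (hn : 2 ≤ n) (hlamn : ordAt v lam = n)
    (δ : (𝓞 F)ˣ) (hδ : mu = algebraMap (𝓞 F) F (δ : 𝓞 F) ^ 2) :
    (1 + algebraMap (𝓞 F) F (δ : 𝓞 F)) * (1 - algebraMap (𝓞 F) F (δ : 𝓞 F)) = lam ∧
    (1 + algebraMap (𝓞 F) F (δ : 𝓞 F)) + (1 - algebraMap (𝓞 F) F (δ : 𝓞 F)) = 2 ∧
    (1 + algebraMap (𝓞 F) F (δ : 𝓞 F)) - (1 - algebraMap (𝓞 F) F (δ : 𝓞 F)) =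
      2 * algebraMap (𝓞 F) F (δ : 𝓞 F) ∧
    (∀ w : HeightOneSpectrum (𝓞 F), w ≠ v →
      w.valuation F (1 + algebraMap (𝓞 F) F (δ : 𝓞 F)) = 1 ∧
      w.valuation F (1 - algebraMap (𝓞 F) F (δ : 𝓞 F)) = 1) ∧
    0 ≤ ordAt v (1 + algebraMap (𝓞 F) F (δ : 𝓞 F)) ∧
    0 ≤ ordAt v (1 - algebraMap (𝓞 F) F (δ : 𝓞 F)) ∧
    ((ordAt v (1 + algebraMap (𝓞 F) F (δ : 𝓞 F)) = 1 ∧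
        ordAt v (1 - algebraMap (𝓞 F) F (δ : 𝓞 F)) = (n : ℤ) - 1) ∨
      (ordAt v (1 + algebraMap (𝓞 F) F (δ : 𝓞 F)) = (n : ℤ) - 1 ∧
        ordAt v (1 - algebraMap (𝓞 F) F (δ : 𝓞 F)) = 1)) := by
  set d := algebraMap (𝓞 F) F (δ : 𝓞 F)
  have hplus : 1 + d = algebraMap (𝓞 F) F (1 + δ) := by simp [d]
  have hminus : 1 - d = algebraMap (𝓞 F) F (1 - δ) := by simp [d]
  have hfac : (1 + d) * (1 - d) = lam := by linear_combination hδ - hsum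
  have hlam0 : lam ≠ 0 := by
    rintro rfl
    simp at hlamn
    omega
  obtain ⟨hplus0, hminus0⟩ := mul_ne_zero_iff.1 (hfac ▸ hlam0)
  have hord2 : ordAt v ((1 + d) + (1 - d)) = 1 := by
    rw [show (1 + d) + (1 - d) = algebraMap (𝓞 F) F 2 by rw [map_ofNat]; ring]
    exact ordAt_algebraMap_of_asIdeal_eq_span v h2
  refine ⟨hfac, by ring, by ring, fun w hw ↦ ?_, ?_, ?_, ?_⟩
  · rw [hplus, hminus]
    refine w.valuation_algebraMap_eq_one_of_mul ?_
    rw [map_mul, ← hplus, ← hminus, hfac, hlamS w hw]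
  · exact ordAt_nonneg_of_valuation_le_one v (hplus ▸ v.valuation_le_one _)
  · exact ordAt_nonneg_of_valuation_le_one v (hminus ▸ v.valuation_le_one _)
  · have h := ordAt_eq_one_or_of_ordAt_add_eq_one v hplus0 hminus0 hord2
      (by rw [hfac, hlamn]; omega)
    rwa [hfac, hlamn] at h

/-- Let `F` be a number field, `𝔮 = 2O_F` the prime of `F` above `2` with `2` inert in `F`,
and `S = {𝔮}`. Suppose `(λ, μ)` solves the `S`-unit equation `λ + μ = 1` with `λ ∈ O_F`,
`ord_𝔮(λ) = n ≥ 2`, `ord_𝔮(μ) = 0`, and `μ = δ²` for a unit `δ ∈ O_F^×`. Set `λ₁ = 1 + δ`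
and `λ₂ = 1 - δ`. Then `λ₁λ₂ = λ`, `λ₁ + λ₂ = 2`, `λ₁ - λ₂ = 2δ`, both `λ₁, λ₂` are
`S`-units with nonnegative `𝔮`-valuation, and one of `ord_𝔮(λ₁)`, `ord_𝔮(λ₂)` equals `1`
while the other equals `n - 1`. -/
theorem sunit_descent_factors (F : Type*) [Field F] [NumberField F]
    (v : HeightOneSpectrum (𝓞 F)) (h2 : v.asIdeal = Ideal.span {(2 : 𝓞 F)})
    (lam mu : F) (hint : ∃ a : 𝓞 F, algebraMap (𝓞 F) F a = lam)
    (hsum : lam + mu = 1)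
    (hlamS : ∀ w : HeightOneSpectrum (𝓞 F), w ≠ v → w.valuation F lam = 1)
    (hmuS : ∀ w : HeightOneSpectrum (𝓞 F), w ≠ v → w.valuation F mu = 1)
    (n : ℕ) (hn : 2 ≤ n) (hlamn : ordAt v lam = n) (hmu0 : ordAt v mu = 0)
    (δ : (𝓞 F)ˣ) (hδ : mu = algebraMap (𝓞 F) F (δ : 𝓞 F) ^ 2) :
    (1 + algebraMap (𝓞 F) F (δ : 𝓞 F)) * (1 - algebraMap (𝓞 F) F (δ : 𝓞 F)) = lam ∧
    (1 + algebraMap (𝓞 F) F (δ : 𝓞 F)) + (1 - algebraMap (𝓞 F) F (δ : 𝓞 F)) = 2 ∧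
    (1 + algebraMap (𝓞 F) F (δ : 𝓞 F)) - (1 - algebraMap (𝓞 F) F (δ : 𝓞 F)) =
      2 * algebraMap (𝓞 F) F (δ : 𝓞 F) ∧
    (∀ w : HeightOneSpectrum (𝓞 F), w ≠ v →
      w.valuation F (1 + algebraMap (𝓞 F) F (δ : 𝓞 F)) = 1 ∧
      w.valuation F (1 - algebraMap (𝓞 F) F (δ : 𝓞 F)) = 1) ∧
    0 ≤ ordAt v (1 + algebraMap (𝓞 F) F (δ : 𝓞 F)) ∧
    0 ≤ ordAt v (1 - algebraMap (𝓞 F) F (δ : 𝓞 F)) ∧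
    ((ordAt v (1 + algebraMap (𝓞 F) F (δ : 𝓞 F)) = 1 ∧
        ordAt v (1 - algebraMap (𝓞 F) F (δ : 𝓞 F)) = (n : ℤ) - 1) ∨
      (ordAt v (1 + algebraMap (𝓞 F) F (δ : 𝓞 F)) = (n : ℤ) - 1 ∧
        ordAt v (1 - algebraMap (𝓞 F) F (δ : 𝓞 F)) = 1)) :=
  sunit_descent_factors_general F v h2 lam mu hsum hlamS n hn hlamn δ hδ
end

section
/- Let F be a number field with class number h_F, and K/F a cyclic extension such that the index [O_F^× : O_F^× ∩ N_{K/F}(K^×)] divides h_F. Let p be a prime totally ramified in K with 𝔭 the unique prime of F above p, and suppose [K:F] = (p-1)/2. Then every unit λ ∈ O_F^× satisfies λ^{2h_F} ≡ 1 (mod 𝔭). -/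
/-!
Since the index of the norm subgroup divides `h_F`, the unit `λ ^ h_F` is a norm `N_{K/F}(x)`
with `x ∈ Kˣ`. As `p` is totally ramified, the prime `𝔓` above it is the only one, so it is
Galois-stable, and its residue field is `𝔽_p`, on which `Gal(K/F)` therefore acts trivially; hence
`N(a) ≡ a ^ [K:F] (mod 𝔓)` for `a ∈ 𝓞 K`. Writing `x` or `x⁻¹` as `a / s` with `s ∉ 𝔓` makes
`λ ^ h_F` an `[K:F]`-th power in `𝔽_pˣ`, and `2 [K:F] = p - 1` then forces its square to be `1`.
-/

open NumberField

namespace Ideal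

variable {R S : Type*} [CommRing R] [CommRing S]

theorem eq_of_span_singleton_eq_pow {P Q : Ideal R} [hP : P.IsMaximal] [hQ : Q.IsPrime] {x : R}
    {n : ℕ} (h : span {x} = P ^ n) (hx : x ∈ Q) : Q = P :=
  (hP.eq_of_le hQ.ne_top (hQ.le_of_pow_le (h ▸ (span_singleton_le_iff_mem Q).mpr hx))).symm

theorem mem_of_span_singleton_eq_pow {P : Ideal R} {x : R} {n : ℕ} (h : span {x} = P ^ n)
    (hn : n ≠ 0) : x ∈ P :=
  pow_le_self hn (h ▸ mem_span_singleton_self x)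

theorem comap_eq_of_span_singleton_eq_pow [Algebra R S] [Algebra.IsIntegral R S]
    [FaithfulSMul R S] {P : Ideal S} [P.IsMaximal] {x : R} {n : ℕ}
    (h : span {algebraMap R S x} = P ^ n) {𝔭 : Ideal R} [𝔭.IsPrime] (hx : x ∈ 𝔭) :
    P.comap (algebraMap R S) = 𝔭 := by
  obtain ⟨Q, -, hQ, hQ𝔭⟩ := exists_ideal_over_prime_of_isIntegral 𝔭 ⊥ (by
    rw [comap_bot_of_injective _ (FaithfulSMul.algebraMap_injective R S)]; exact bot_le)
  have hxQ : algebraMap R S x ∈ Q := by rw [← mem_comap, hQ𝔭]; exact hx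
  rwa [← eq_of_span_singleton_eq_pow h hxQ]

theorem absNorm_eq_of_span_natCast_eq_pow [IsDedekindDomain S] [Module.Free ℤ S]
    [Module.Finite ℤ S] {P : Ideal S} {n : ℕ} (h : span {(n : S)} = P ^ Module.finrank ℤ S) :
    absNorm P = n := by
  have := absNorm_span_natCast (S := S) n
  rw [h, map_pow] at this
  exact Nat.pow_left_injective Module.finrank_pos.ne' this

end Ideal

theorem RingHom.apply_eq_self_of_natCard_prime {k : Type*} [Ring k] {p : ℕ} (hp : p.Prime)
    (hk : Nat.card k = p) (φ : k →+* k) (z : k) : φ z = z := by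
  have : Fintype k := @Fintype.ofFinite k (Nat.finite_of_card_ne_zero (hk ▸ hp.ne_zero))
  let e := ZMod.ringEquivOfPrime k hp (Nat.card_eq_fintype_card (α := k) ▸ hk)
  obtain ⟨w, rfl⟩ := e.surjective z
  exact RingHom.congr_fun (RingHom.ext_zmod (φ.comp e.toRingHom) e.toRingHom) w

theorem Ideal.Quotient.mk_apply_eq_of_natCard_prime {R : Type*} [CommRing R] {P : Ideal R}
    {p : ℕ} (hp : p.Prime) (hP : Nat.card (R ⧸ P) = p) (f : R →+* R) (hf : P ≤ P.comap f)
    (y : R) : mk P (f y) = mk P y := by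
  rw [← quotientMap_mk (H := hf)]
  exact RingHom.apply_eq_self_of_natCard_prime hp hP _ _

theorem FiniteField.sq_eq_one_of_eq_pow {k : Type*} [Field k] [Finite k] {m : ℕ}
    (hm : Nat.card k - 1 ∣ 2 * m) {e c : k} (he : e ≠ 0) (hc : e = c ^ m) : e ^ 2 = 1 := by
  have := Fintype.ofFinite k
  subst hc
  rcases eq_or_ne c 0 with rfl | hc0
  · obtain rfl : m = 0 := by by_contra hm0; exact he (zero_pow hm0)
    simp
  · obtain ⟨t, ht⟩ := hm
    rw [← pow_mul, mul_comm, ht, pow_mul, Nat.card_eq_fintype_card, pow_card_sub_one_eq_one c hc0,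
      one_pow]

theorem IsDedekindDomain.exists_mul_eq_or_exists_inv_mul_eq {R K : Type*} [CommRing R]
    [IsDedekindDomain R] [Field K] [Algebra R K] [IsFractionRing R K] {P : Ideal R} [P.IsPrime]
    (hP : P ≠ ⊥) (x : K) :
    (∃ a s : R, s ∉ P ∧ x * algebraMap R K s = algebraMap R K a) ∨
      ∃ a s : R, s ∉ P ∧ x⁻¹ * algebraMap R K s = algebraMap R K a := by
  let Rₚ := Localization.subalgebra.ofField K P.primeCompl P.primeCompl_le_nonZeroDivisors
  have : IsDiscreteValuationRing Rₚ :=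
    IsLocalization.AtPrime.isDiscreteValuationRing_of_dedekind_domain R hP Rₚ
  have hinteger : ∀ y : K, IsLocalization.IsInteger Rₚ y →
      ∃ a s : R, s ∉ P ∧ y * algebraMap R K s = algebraMap R K a := by
    rintro y ⟨⟨_, a, s, hs, rfl⟩, rfl⟩
    refine ⟨a, s, hs, ?_⟩
    have : algebraMap R K s ≠ 0 :=
      IsFractionRing.to_map_ne_zero_of_mem_nonZeroDivisors (P.primeCompl_le_nonZeroDivisors hs)
    simp [this]
  exact (ValuationRing.isInteger_or_isInteger Rₚ x).imp (hinteger x) (hinteger x⁻¹)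

namespace NumberField.RingOfIntegers

variable {F K : Type*} [Field F] [NumberField F] [Field K] [NumberField K] [Algebra F K]
  [IsGalois F K]

theorem algebraMap_norm_eq_prod (a : 𝓞 K) :
    algebraMap (𝓞 F) (𝓞 K) (RingOfIntegers.norm F a) = ∏ σ : K ≃ₐ[F] K, mapRingHom σ a := by
  ext
  rw [RingOfIntegers.coe_algebraMap_norm, Algebra.norm_eq_prod_automorphisms]
  push_cast
  rfl

theorem mk_algebraMap_norm_eq_pow {𝔓 : Ideal (𝓞 K)}
    (hfix : ∀ (σ : K ≃ₐ[F] K) (y : 𝓞 K),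
      Ideal.Quotient.mk 𝔓 (mapRingHom σ y) = Ideal.Quotient.mk 𝔓 y) (a : 𝓞 K) :
    Ideal.Quotient.mk 𝔓 (algebraMap (𝓞 F) (𝓞 K) (RingOfIntegers.norm F a)) =
      Ideal.Quotient.mk 𝔓 a ^ Module.finrank F K := by
  rw [algebraMap_norm_eq_prod, map_prod, Finset.prod_congr rfl fun σ _ ↦ hfix σ a,
    Finset.prod_const, Finset.card_univ, ← Nat.card_eq_fintype_card, IsGalois.card_aut_eq_finrank]

end NumberField.RingOfIntegers

namespace NumberField

variable {F K : Type*} [Field F] [Field K] [NumberField K] [Algebra F K] {p : ℕ}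
  {𝔓 : Ideal (𝓞 K)}

theorem natCard_quotient_eq_of_span_natCast_eq_pow
    (hsp : Ideal.span {(p : 𝓞 K)} = 𝔓 ^ Module.finrank ℚ K) : Nat.card (𝓞 K ⧸ 𝔓) = p := by
  rw [← Submodule.cardQuot_apply, ← Ideal.absNorm_apply]
  exact Ideal.absNorm_eq_of_span_natCast_eq_pow (RingOfIntegers.rank K ▸ hsp)

theorem mk_mapRingHom_eq_of_span_natCast_eq_pow [𝔓.IsMaximal] (hp : p.Prime)
    (hsp : Ideal.span {(p : 𝓞 K)} = 𝔓 ^ Module.finrank ℚ K) (σ : K ≃ₐ[F] K) (y : 𝓞 K) :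
    Ideal.Quotient.mk 𝔓 (RingOfIntegers.mapRingHom σ y) = Ideal.Quotient.mk 𝔓 y := by
  refine Ideal.Quotient.mk_apply_eq_of_natCard_prime hp
    (natCard_quotient_eq_of_span_natCast_eq_pow hsp) _ (le_of_eq ?_) y
  refine (Ideal.eq_of_span_singleton_eq_pow hsp ?_).symm
  rw [Ideal.mem_comap, map_natCast]
  exact Ideal.mem_of_span_singleton_eq_pow hsp Module.finrank_pos.ne'

variable [NumberField F] [IsGalois F K] [𝔓.IsMaximal]

theorem sq_sub_one_mem_comap_of_norm_eq_of_mul_eq (hp : p.Prime)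
    (hsp : Ideal.span {(p : 𝓞 K)} = 𝔓 ^ Module.finrank ℚ K)
    (hdeg : p - 1 ∣ 2 * Module.finrank F K) {η : (𝓞 F)ˣ} {y : K}
    (hN : Algebra.norm F y = algebraMap (𝓞 F) F η) {a s : 𝓞 K} (hs : s ∉ 𝔓)
    (hys : y * algebraMap (𝓞 K) K s = algebraMap (𝓞 K) K a) :
    (η : 𝓞 F) ^ 2 - 1 ∈ 𝔓.comap (algebraMap (𝓞 F) (𝓞 K)) := by
  let := Ideal.Quotient.field 𝔓
  have hcard := natCard_quotient_eq_of_span_natCast_eq_pow hsp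
  have := Nat.finite_of_card_ne_zero (hcard ▸ hp.ne_zero)
  set ρ := (Ideal.Quotient.mk 𝔓).comp (algebraMap (𝓞 F) (𝓞 K))
  have hnorm : RingOfIntegers.norm F a = η * RingOfIntegers.norm F s := by
    ext
    simp [← hys, hN]
  have hres : ρ η * Ideal.Quotient.mk 𝔓 s ^ Module.finrank F K =
      Ideal.Quotient.mk 𝔓 a ^ Module.finrank F K := by
    simp only [ρ, RingHom.comp_apply]
    have hfix := mk_mapRingHom_eq_of_span_natCast_eq_pow (F := F) hp hsp
    rw [← RingOfIntegers.mk_algebraMap_norm_eq_pow hfix,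
      ← RingOfIntegers.mk_algebraMap_norm_eq_pow hfix, hnorm, map_mul, map_mul]
  have hs' : Ideal.Quotient.mk 𝔓 s ≠ 0 := mt Ideal.Quotient.eq_zero_iff_mem.mp hs
  have hpow : ρ η = (Ideal.Quotient.mk 𝔓 a / Ideal.Quotient.mk 𝔓 s) ^ Module.finrank F K := by
    rw [div_pow, ← hres, mul_div_cancel_right₀ _ (pow_ne_zero _ hs')]
  have hsq := FiniteField.sq_eq_one_of_eq_pow (hcard ▸ hdeg) (η.isUnit.map ρ).ne_zero hpow
  rw [Ideal.mem_comap, ← Ideal.Quotient.eq_zero_iff_mem]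
  change ρ ((η : 𝓞 F) ^ 2 - 1) = 0
  rw [map_sub, map_pow, map_one, hsq, sub_self]

theorem sq_sub_one_mem_comap_of_norm_eq (hp : p.Prime)
    (hsp : Ideal.span {(p : 𝓞 K)} = 𝔓 ^ Module.finrank ℚ K)
    (hdeg : p - 1 ∣ 2 * Module.finrank F K) {ε : (𝓞 F)ˣ} {x : K}
    (hN : Algebra.norm F x = algebraMap (𝓞 F) F ε) :
    (ε : 𝓞 F) ^ 2 - 1 ∈ 𝔓.comap (algebraMap (𝓞 F) (𝓞 K)) := by
  have h𝔓 : 𝔓 ≠ ⊥ := by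
    rintro rfl
    simpa [hp.ne_zero] using Ideal.mem_of_span_singleton_eq_pow hsp Module.finrank_pos.ne'
  rcases IsDedekindDomain.exists_mul_eq_or_exists_inv_mul_eq h𝔓 x with
    ⟨a, s, hs, hys⟩ | ⟨a, s, hs, hys⟩
  · exact sq_sub_one_mem_comap_of_norm_eq_of_mul_eq hp hsp hdeg hN hs hys
  · have hN' : Algebra.norm F x⁻¹ = algebraMap (𝓞 F) F ↑ε⁻¹ := by
      rw [Algebra.norm_inv, hN, map_units_inv]
    have hε : (ε : 𝓞 F) ^ 2 - 1 = -(ε : 𝓞 F) ^ 2 * ((ε⁻¹ : (𝓞 F)ˣ) ^ 2 - 1) := by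
      linear_combination ((ε : 𝓞 F) * ↑ε⁻¹ + 1) * ε.mul_inv
    rw [hε]
    exact Ideal.mul_mem_left _ _ (sq_sub_one_mem_comap_of_norm_eq_of_mul_eq hp hsp hdeg hN' hs hys)

end NumberField

theorem unit_pow_two_mul_classNumber_congruent_one_general (F K : Type*) [Field F] [NumberField F]
    [Field K] [NumberField K] [Algebra F K] [IsGalois F K]
    (hidx : (Subgroup.comap (Units.map (algebraMap (𝓞 F) F).toMonoidHom)
      (Units.map (Algebra.norm F : K →* F)).range).index ∣ classNumber F)
    (p : ℕ) (hp : p.Prime) (hdeg : Module.finrank F K = (p - 1) / 2)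
    (htot : ∃ 𝔓 : Ideal (𝓞 K), 𝔓.IsMaximal ∧
      Ideal.span {(p : 𝓞 K)} = 𝔓 ^ Module.finrank ℚ K)
    (𝔭 : Ideal (𝓞 F)) (h𝔭 : 𝔭.IsMaximal) (hp𝔭 : (p : 𝓞 F) ∈ 𝔭) :
    ∀ lam : (𝓞 F)ˣ, (lam : 𝓞 F) ^ (2 * classNumber F) - 1 ∈ 𝔭 := by
  intro lam
  obtain ⟨𝔓, _, hsp⟩ := htot
  have hdeg' : p - 1 ∣ 2 * Module.finrank F K := by
    rcases hp.eq_two_or_odd' with rfl | hodd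
    · simp
    · rw [hdeg, Nat.two_mul_div_two_of_even (Nat.Odd.sub_odd hodd odd_one)]
  obtain ⟨m, hm⟩ := hidx
  obtain ⟨x, hx⟩ : lam ^ classNumber F ∈ Subgroup.comap _ _ := by
    rw [hm, pow_mul]
    exact pow_mem (Subgroup.pow_index_mem _ lam) m
  have hN : Algebra.norm F (x : K) = algebraMap (𝓞 F) F ↑(lam ^ classNumber F) :=
    congrArg Units.val hx
  have hsp' : Ideal.span {algebraMap (𝓞 F) (𝓞 K) p} = 𝔓 ^ Module.finrank ℚ K := by
    rwa [map_natCast]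
  rw [mul_comm, pow_mul, ← Ideal.comap_eq_of_span_singleton_eq_pow hsp' hp𝔭]
  exact_mod_cast sq_sub_one_mem_comap_of_norm_eq hp hsp hdeg' hN

/-- Let `F` be a number field with class number `h_F`, and `K/F` a cyclic extension such
that the index `[O_F^× : O_F^× ∩ N_{K/F}(K^×)]` divides `h_F`. Let `p` be a prime totally
ramified in `K` (so `p·O_K = 𝔓^[K:ℚ]`) with `𝔭` the unique prime of `F` above `p`, and
suppose `[K:F] = (p-1)/2`. Then every unit `λ ∈ O_F^×` satisfies `λ^(2h_F) ≡ 1 (mod 𝔭)`. -/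
theorem unit_pow_two_mul_classNumber_congruent_one (F K : Type*) [Field F] [NumberField F]
    [Field K] [NumberField K] [Algebra F K] [IsGalois F K] [IsCyclic (K ≃ₐ[F] K)]
    (hidx : (Subgroup.comap (Units.map (algebraMap (𝓞 F) F).toMonoidHom)
      (Units.map (Algebra.norm F : K →* F)).range).index ∣ classNumber F)
    (p : ℕ) (hp : p.Prime) (hdeg : Module.finrank F K = (p - 1) / 2)
    (htot : ∃ 𝔓 : Ideal (𝓞 K), 𝔓.IsMaximal ∧
      Ideal.span {(p : 𝓞 K)} = 𝔓 ^ Module.finrank ℚ K)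
    (𝔭 : Ideal (𝓞 F)) (h𝔭 : 𝔭.IsMaximal) (hp𝔭 : (p : 𝓞 F) ∈ 𝔭) :
    ∀ lam : (𝓞 F)ˣ, (lam : 𝓞 F) ^ (2 * classNumber F) - 1 ∈ 𝔭 :=
  unit_pow_two_mul_classNumber_congruent_one_general F K hidx p hp hdeg htot 𝔭 h𝔭 hp𝔭
end
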